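/- Let G be a finite abelian group, identified with ℤ_{n₁} × ... × ℤ_{n_m}, and let p, q be probability distributions on G with Fourier transforms λ_a(p) = ∑_k p_k e^{2πi a·k} (a·k = ∑_j a_j k_j / n_j). Suppose λ_a(q) = 0 implies λ_a(p) = 0, and suppose that for all a ∉ {0} ∪ {a : λ_a(q) = 0}, |λ_a(p)| / |λ_a(q)|^r < 1. Then for all sufficiently large N, the function w: G → ℝ defined by w_k = (1/|G|) ∑_{a: λ_a(q) ≠ 0} (λ_a(p)^N / λ_a(q)^{⌊rN⌋}) e^{2πi a·k} is real and nonnegative for all k, and ∑_k w_k = 1. -/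

import Mathlib

/-!
The pairing `(a, k) ↦ exp (2πi ∑ aⱼ kⱼ / nⱼ)` is a nondegenerate bicharacter `ψ` of
`G = ∏ ℤ/nⱼ`, so `w = |G|⁻¹ ∑ₐ Tₐ ψ a` with `Tₐ = λₐ(p)ᴺ / λₐ(q)^⌊rN⌋` has total mass
`T₀ = 1` by orthogonality. Since `λ₋ₐ = conj λₐ`, each `w k` is real, and it equals
`|G|⁻¹ (1 + E)` with `‖E‖ ≤ ∑_{a ≠ 0} ‖Tₐ‖ ≤ ∑_{a ≠ 0} (‖λₐ(p)‖ / ‖λₐ(q)‖ʳ)ᴺ`, which tends to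
`0` because `‖λₐ(q)‖ ≤ 1` and every ratio is `< 1`.
-/

open scoped ComplexOrder Real
open Finset Filter Topology ComplexConjugate

lemma Complex.nonneg_of_conj_eq_of_norm_sub_one_le {z : ℂ} (hz : conj z = z) (h : ‖z - 1‖ ≤ 1) :
    0 ≤ z := by
  obtain ⟨x, rfl⟩ := Complex.conj_eq_iff_real.1 hz
  rw [← Complex.ofReal_one, ← Complex.ofReal_sub, Complex.norm_real, Real.norm_eq_abs] at h
  exact Complex.zero_le_real.2 (by linarith [neg_abs_le (x - 1)])

lemma norm_pow_div_pow_floor_le {𝕜 : Type*} [NormedDivisionRing 𝕜] (x y : 𝕜) [Decidable (y = 0)]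
    (hy : ‖y‖ ≤ 1) {r : ℝ} (hr : 0 ≤ r) (N : ℕ) :
    ‖if y = 0 then 0 else x ^ N / y ^ ⌊r * N⌋₊‖ ≤ (‖x‖ / ‖y‖ ^ r) ^ N := by
  split_ifs with h
  · rw [norm_zero]; positivity
  have hy0 : 0 < ‖y‖ := norm_pos_iff.2 h
  have hfloor : (⌊r * N⌋₊ : ℝ) ≤ r * N := Nat.floor_le (by positivity)
  calc ‖x ^ N / y ^ ⌊r * N⌋₊‖ = ‖x‖ ^ N / ‖y‖ ^ (⌊r * N⌋₊ : ℝ) := by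
        rw [norm_div, norm_pow, norm_pow, Real.rpow_natCast]
    _ ≤ ‖x‖ ^ N / ‖y‖ ^ (r * N) := by
        gcongr ‖x‖ ^ N / ?_
        exact Real.rpow_le_rpow_of_exponent_ge hy0 hy hfloor
    _ = (‖x‖ / ‖y‖ ^ r) ^ N := by
        rw [div_pow, ← Real.rpow_natCast (‖y‖ ^ r), ← Real.rpow_mul hy0.le]

lemma tendsto_sum_pow_atTop_nhds_zero {ι : Type*} (s : Finset ι) (c : ι → ℝ)
    (hc0 : ∀ a ∈ s, 0 ≤ c a) (hc1 : ∀ a ∈ s, c a < 1) :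
    Tendsto (fun N : ℕ => ∑ a ∈ s, c a ^ N) atTop (𝓝 0) := by
  simpa using tendsto_finsetSum s fun a ha =>
    tendsto_pow_atTop_nhds_zero_of_lt_one (hc0 a ha) (hc1 a ha)

section Bicharacter

variable {G : Type*} [AddCommGroup G] [Fintype G] (ψ : AddChar G (AddChar G ℂ))

lemma AddChar.map_neg_apply_eq_conj (a k : G) : ψ (-a) k = conj (ψ a k) := by
  rw [AddChar.map_neg_eq_inv, AddChar.inv_apply, AddChar.map_neg_eq_conj]

lemma norm_sum_mul_addChar_le (χ : AddChar G ℂ) (f : G → ℝ) (hf : ∀ k, 0 ≤ f k) :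
    ‖∑ k, (f k : ℂ) * χ k‖ ≤ ∑ k, f k := by
  refine (norm_sum_le _ _).trans_eq (sum_congr rfl fun k _ => ?_)
  rw [norm_mul, AddChar.norm_apply, mul_one, Complex.norm_real, Real.norm_of_nonneg (hf k)]

lemma conj_sum_ofReal_mul_bichar (f : G → ℝ) (a : G) :
    conj (∑ k, (f k : ℂ) * ψ a k) = ∑ k, (f k : ℂ) * ψ (-a) k := by
  simp_rw [map_sum, map_mul, Complex.conj_ofReal, ψ.map_neg_apply_eq_conj]

lemma conj_sum_mul_bichar_eq_self (T : G → ℂ) (hT : ∀ a, T (-a) = conj (T a)) (k : G) :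
    conj (∑ a, T a * ψ a k) = ∑ a, T a * ψ a k := by
  rw [map_sum]
  refine Fintype.sum_equiv (Equiv.neg G) _ _ fun a => ?_
  rw [Equiv.neg_apply, hT, ψ.map_neg_apply_eq_conj, ← map_mul]

lemma norm_sum_mul_bichar_sub_one_le [DecidableEq G] (T : G → ℂ) (hT : T 0 = 1) (k : G) :
    ‖∑ a, T a * ψ a k - 1‖ ≤ ∑ a ∈ univ.erase 0, ‖T a‖ := by
  rw [← add_sum_erase _ _ (mem_univ 0), hT, ψ.map_zero_eq_one, AddChar.one_apply, one_mul,
    add_sub_cancel_left]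
  refine (norm_sum_le _ _).trans_eq (sum_congr rfl fun a _ => ?_)
  rw [norm_mul, AddChar.norm_apply, mul_one]

lemma zero_le_sum_mul_bichar [DecidableEq G] (T : G → ℂ) (hT0 : T 0 = 1)
    (hT : ∀ a, T (-a) = conj (T a)) (hsmall : ∑ a ∈ univ.erase 0, ‖T a‖ ≤ 1) (k : G) :
    0 ≤ ∑ a, T a * ψ a k :=
  Complex.nonneg_of_conj_eq_of_norm_sub_one_le (conj_sum_mul_bichar_eq_self ψ T hT k)
    ((norm_sum_mul_bichar_sub_one_le ψ T hT0 k).trans hsmall)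

lemma sum_sum_mul_bichar_eq (hψ : Function.Injective ψ) (T : G → ℂ) :
    ∑ k, ∑ a, T a * ψ a k = Fintype.card G * T 0 := by
  classical
  have hψ0 : ∀ a, ψ a = 0 ↔ a = 0 := fun a => by
    rw [← AddChar.one_eq_zero, ← ψ.map_zero_eq_one, hψ.eq_iff]
  rw [sum_comm]
  simp_rw [← mul_sum, AddChar.sum_eq_ite, hψ0, mul_ite, mul_zero, sum_ite_eq', mem_univ, if_true,
    mul_comm]

end Bicharacter

section PiZMod

variable {ι : Type*} [Fintype ι] (n : ι → ℕ) [∀ i, NeZero (n i)]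

noncomputable def piStdAddChar : AddChar (∀ i, ZMod (n i)) (AddChar (∀ i, ZMod (n i)) ℂ) where
  toFun a :=
    { toFun := fun k => ∏ i, ZMod.stdAddChar (a i * k i)
      map_zero_eq_one' := by simp
      map_add_eq_mul' := fun k l => by
        simp only [Pi.add_apply, mul_add, AddChar.map_add_eq_mul, prod_mul_distrib] }
  map_zero_eq_one' := by ext; simp
  map_add_eq_mul' a b := by
    ext k
    simp only [AddChar.coe_mk, AddChar.mul_apply, Pi.add_apply, add_mul, AddChar.map_add_eq_mul,
      prod_mul_distrib]

lemma piStdAddChar_apply (a k : ∀ i, ZMod (n i)) :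
    piStdAddChar n a k = ∏ i, ZMod.stdAddChar (a i * k i) := rfl

lemma piStdAddChar_apply_single [DecidableEq ι] (a : ∀ i, ZMod (n i)) (i : ι) :
    piStdAddChar n a (Pi.single i 1) = ZMod.stdAddChar (a i) := by
  rw [piStdAddChar_apply, prod_eq_single i (fun j _ hj => by simp [hj]) (by simp)]
  simp

lemma injective_piStdAddChar : Function.Injective (piStdAddChar n) := by
  classical
  intro a b hab
  funext i
  apply ZMod.injective_stdAddChar
  rw [← piStdAddChar_apply_single, ← piStdAddChar_apply_single, hab]

lemma exp_eq_piStdAddChar (a k : ∀ i, ZMod (n i)) :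
    Complex.exp (2 * π * Complex.I * ∑ i, ((a i).val * (k i).val : ℂ) / (n i : ℂ)) =
      piStdAddChar n a k := by
  rw [piStdAddChar_apply, mul_sum, Complex.exp_sum]
  refine prod_congr rfl fun i _ => ?_
  rw [← ZMod.natCast_zmod_val (a i * k i), ZMod.val_mul, ZMod.natCast_mod, ZMod.stdAddChar_apply,
    ZMod.toCircle_natCast]
  push_cast
  ring_nf

end PiZMod

theorem stmt9_general
    (m : ℕ) (n : Fin m → ℕ) [∀ j, NeZero (n j)]
    (p q : (∀ j, ZMod (n j)) → ℝ)
    (hp1 : ∑ k, p k = 1)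
    (hq0 : ∀ k, 0 ≤ q k) (hq1 : ∑ k, q k = 1)
    (lam : (∀ j, ZMod (n j)) → ((∀ j, ZMod (n j)) → ℝ) → ℂ)
    (hlam : ∀ a f, lam a f = ∑ k, (f k : ℂ) *
      Complex.exp (2 * π * Complex.I * ∑ j, ((a j).val * (k j).val : ℂ) / (n j : ℂ)))
    (r : ℝ) (hr : 0 < r)
    (hlt : ∀ a, a ≠ 0 → lam a q ≠ 0 → ‖lam a p‖ / ‖lam a q‖ ^ r < 1) :
    ∃ N₀ : ℕ, ∀ N ≥ N₀,
      (∀ k : (∀ j, ZMod (n j)),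
        0 ≤ (1 / (Fintype.card (∀ j, ZMod (n j)) : ℂ)) *
          ∑ a : (∀ j, ZMod (n j)),
            (if lam a q = 0 then 0 else lam a p ^ N / lam a q ^ (⌊r * (N : ℝ)⌋₊)) *
              Complex.exp (2 * π * Complex.I * ∑ j, ((a j).val * (k j).val : ℂ) / (n j : ℂ))) ∧
      (∑ k : (∀ j, ZMod (n j)),
        (1 / (Fintype.card (∀ j, ZMod (n j)) : ℂ)) *
          ∑ a : (∀ j, ZMod (n j)),
            (if lam a q = 0 then 0 else lam a p ^ N / lam a q ^ (⌊r * (N : ℝ)⌋₊)) *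
              Complex.exp (2 * π * Complex.I * ∑ j, ((a j).val * (k j).val : ℂ) / (n j : ℂ))) = 1 := by
  simp only [exp_eq_piStdAddChar] at hlam ⊢
  set ψ := piStdAddChar n
  have hlam0 : ∀ f, ∑ k, f k = 1 → lam 0 f = 1 := fun f hf => by
    simp [hlam, ψ.map_zero_eq_one, ← Complex.ofReal_sum, hf]
  have hconj : ∀ a f, conj (lam a f) = lam (-a) f := fun a f => by
    rw [hlam, hlam, conj_sum_ofReal_mul_bichar]
  have hq_le : ∀ a, ‖lam a q‖ ≤ 1 := fun a => by
    simpa [hlam, hq1] using norm_sum_mul_addChar_le (ψ a) q hq0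
  have hc1 : ∀ a ∈ univ.erase 0, ‖lam a p‖ / ‖lam a q‖ ^ r < 1 := fun a ha => by
    by_cases hqa : lam a q = 0
    -- the ratio is then `‖λₐ(p)‖ / 0 = 0`
    · simp [hqa, Real.zero_rpow hr.ne']
    · exact hlt a (ne_of_mem_erase ha) hqa
  obtain ⟨N₀, hN₀⟩ := eventually_atTop.1 <| (tendsto_sum_pow_atTop_nhds_zero _ _
    (fun _ _ => by positivity) hc1).eventually_lt_const one_pos
  refine ⟨N₀, fun N hN => ?_⟩
  set T : (∀ j, ZMod (n j)) → ℂ := fun a =>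
    if lam a q = 0 then 0 else lam a p ^ N / lam a q ^ ⌊r * (N : ℝ)⌋₊ with hT
  have hT0 : T 0 = 1 := by simp [hT, hlam0 p hp1, hlam0 q hq1]
  have hTconj : ∀ a, T (-a) = conj (T a) := fun a => by
    simp only [hT, ← hconj, map_eq_zero, apply_ite conj, map_zero, map_div₀, map_pow]
  have hTsmall : ∑ a ∈ univ.erase 0, ‖T a‖ ≤ 1 :=
    (sum_le_sum fun a _ => norm_pow_div_pow_floor_le _ _ (hq_le a) hr.le N).trans (hN₀ N hN).le
  refine ⟨fun k => mul_nonneg ?_ (zero_le_sum_mul_bichar ψ T hT0 hTconj hTsmall k), ?_⟩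
  · exact one_div_nonneg.2 (Nat.cast_nonneg _)
  · rw [← mul_sum, sum_sum_mul_bichar_eq ψ (injective_piStdAddChar n) T, hT0, mul_one,
      one_div_mul_cancel (Nat.cast_ne_zero.2 Fintype.card_ne_zero)]

/-- For probability distributions `p, q` on `G = ℤ_{n₁} × ⋯ × ℤ_{n_m}` with Fourier
transforms `λ_a`, if `λ_a(q) = 0 ⇒ λ_a(p) = 0` and `|λ_a(p)|/|λ_a(q)|^r < 1` off the
trivial character, then for all large `N` the inverse Fourier transform of
`λ_a(p)^N / λ_a(q)^{⌊rN⌋}` is a probability distribution. -/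
theorem stmt9
    (m : ℕ) (n : Fin m → ℕ) [∀ j, NeZero (n j)]
    (p q : (∀ j, ZMod (n j)) → ℝ)
    (hp0 : ∀ k, 0 ≤ p k) (hp1 : ∑ k, p k = 1)
    (hq0 : ∀ k, 0 ≤ q k) (hq1 : ∑ k, q k = 1)
    (lam : (∀ j, ZMod (n j)) → ((∀ j, ZMod (n j)) → ℝ) → ℂ)
    (hlam : ∀ a f, lam a f = ∑ k, (f k : ℂ) *
      Complex.exp (2 * π * Complex.I * ∑ j, ((a j).val * (k j).val : ℂ) / (n j : ℂ)))
    (r : ℝ) (hr : 0 < r)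
    (h0 : ∀ a, lam a q = 0 → lam a p = 0)
    (hlt : ∀ a, a ≠ 0 → lam a q ≠ 0 → ‖lam a p‖ / ‖lam a q‖ ^ r < 1) :
    ∃ N₀ : ℕ, ∀ N ≥ N₀,
      (∀ k : (∀ j, ZMod (n j)),
        0 ≤ (1 / (Fintype.card (∀ j, ZMod (n j)) : ℂ)) *
          ∑ a : (∀ j, ZMod (n j)),
            (if lam a q = 0 then 0 else lam a p ^ N / lam a q ^ (⌊r * (N : ℝ)⌋₊)) *
              Complex.exp (2 * π * Complex.I * ∑ j, ((a j).val * (k j).val : ℂ) / (n j : ℂ))) ∧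
      (∑ k : (∀ j, ZMod (n j)),
        (1 / (Fintype.card (∀ j, ZMod (n j)) : ℂ)) *
          ∑ a : (∀ j, ZMod (n j)),
            (if lam a q = 0 then 0 else lam a p ^ N / lam a q ^ (⌊r * (N : ℝ)⌋₊)) *
              Complex.exp (2 * π * Complex.I * ∑ j, ((a j).val * (k j).val : ℂ) / (n j : ℂ))) = 1 :=
  stmt9_general m n p q hp1 hq0 hq1 lam hlam r hr hlt
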